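/- arXiv:2008.13286 — 12 statements merged into one kernel-verified Lean document; each statement's English description precedes it below -/
import Mathlib

section
/- Let K be a field of characteristic 0. For any four symmetric 2×2 matrices a₁, a₂, a₃, a₄ over K, the alternating sum Σ_{σ ∈ Sym(3)} sgn(σ)·[a_{σ(1)},a_{σ(2)}]·[a_{σ(3)},a₄] = 0, where Sym(3) permutes indices 1,2,3 and [x,y] = xy − yx. -/
set_option maxHeartbeats 2000000

theorem alternating_sum_identity (K : Type*) [Field K] [CharZero K]
    (a : Fin 3 → Matrix (Fin 2) (Fin 2) K) (a₄ : Matrix (Fin 2) (Fin 2) K)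
    (h : ∀ i, (a i).IsSymm) (h₄ : a₄.IsSymm) :
    ∑ σ : Equiv.Perm (Fin 3),
      (Equiv.Perm.sign σ : ℤ) •
        ((a (σ 0) * a (σ 1) - a (σ 1) * a (σ 0)) * (a (σ 2) * a₄ - a₄ * a (σ 2))) = 0 := by
  have huniv : (Finset.univ : Finset (Equiv.Perm (Fin 3))) =
      {1, Equiv.swap 0 1, Equiv.swap 0 2, Equiv.swap 1 2,
       Equiv.swap 0 1 * Equiv.swap 1 2, Equiv.swap 1 2 * Equiv.swap 0 1} := by decide
  rw [huniv]
  rw [Finset.sum_insert (by decide), Finset.sum_insert (by decide),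
      Finset.sum_insert (by decide), Finset.sum_insert (by decide),
      Finset.sum_insert (by decide), Finset.sum_singleton]
  have e1 := (h 0).apply 1 0
  have e2 := (h 1).apply 1 0
  have e3 := (h 2).apply 1 0
  have e4 := h₄.apply 1 0
  norm_num [Equiv.Perm.sign_swap, Equiv.Perm.mul_apply, Equiv.swap_apply_def,
    Fin.ext_iff, show ((0:Fin 3) ≠ 1) by decide,
    show ((0:Fin 3) ≠ 2) by decide, show ((1:Fin 3) ≠ 2) by decide]
  ext i j
  fin_cases i <;> fin_cases j <;>
    simp [Matrix.mul_apply, Fin.sum_univ_succ, ← e1, ← e2, ← e3, ← e4] <;> ring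
end

section
/- Let K be a field of characteristic 0. For any four symmetric 2×2 matrices a₁, a₂, a₃, a₄ over K, the anticommutator identity [a₁,a₂] ∘ [a₃,a₄,a₁] = 0 holds, where x ∘ y = xy + yx and [a₃,a₄,a₁] = [[a₃,a₄],a₁]. -/
set_option maxHeartbeats 1000000 in
private lemma aux_anticomm (K : Type*) [Field K] (p q r s t u v w x y z k : K) :
    let a₁ : Matrix (Fin 2) (Fin 2) K := !![p, q; q, r]
    let a₂ : Matrix (Fin 2) (Fin 2) K := !![s, t; t, u]
    let a₃ : Matrix (Fin 2) (Fin 2) K := !![v, w; w, x]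
    let a₄ : Matrix (Fin 2) (Fin 2) K := !![y, z; z, k]
    (a₁ * a₂ - a₂ * a₁) * ((a₃ * a₄ - a₄ * a₃) * a₁ - a₁ * (a₃ * a₄ - a₄ * a₃))
      + ((a₃ * a₄ - a₄ * a₃) * a₁ - a₁ * (a₃ * a₄ - a₄ * a₃)) * (a₁ * a₂ - a₂ * a₁) = 0 := by
  intro a₁ a₂ a₃ a₄
  ext i j
  fin_cases i <;> fin_cases j <;>
    simp [a₁, a₂, a₃, a₄, Matrix.mul_apply, Fin.sum_univ_two] <;> ring

theorem anticommutator_identity (K : Type*) [Field K] [CharZero K]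
    (a₁ a₂ a₃ a₄ : Matrix (Fin 2) (Fin 2) K)
    (h₁ : a₁.IsSymm) (h₂ : a₂.IsSymm) (h₃ : a₃.IsSymm) (h₄ : a₄.IsSymm) :
    (a₁ * a₂ - a₂ * a₁) * ((a₃ * a₄ - a₄ * a₃) * a₁ - a₁ * (a₃ * a₄ - a₄ * a₃))
      + ((a₃ * a₄ - a₄ * a₃) * a₁ - a₁ * (a₃ * a₄ - a₄ * a₃)) * (a₁ * a₂ - a₂ * a₁) = 0 := by
  have r₁ : a₁ = !![a₁ 0 0, a₁ 0 1; a₁ 0 1, a₁ 1 1] := by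
    conv_lhs => rw [Matrix.eta_fin_two a₁, h₁.apply 0 1]
  have r₂ : a₂ = !![a₂ 0 0, a₂ 0 1; a₂ 0 1, a₂ 1 1] := by
    conv_lhs => rw [Matrix.eta_fin_two a₂, h₂.apply 0 1]
  have r₃ : a₃ = !![a₃ 0 0, a₃ 0 1; a₃ 0 1, a₃ 1 1] := by
    conv_lhs => rw [Matrix.eta_fin_two a₃, h₃.apply 0 1]
  have r₄ : a₄ = !![a₄ 0 0, a₄ 0 1; a₄ 0 1, a₄ 1 1] := by
    conv_lhs => rw [Matrix.eta_fin_two a₄, h₄.apply 0 1]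
  rw [r₁, r₂, r₃, r₄]
  exact aux_anticomm K _ _ _ _ _ _ _ _ _ _ _ _
end

section
/- Let K be a field of characteristic 0. For any two symmetric 2×2 matrices a and b over K, the identity [b,a,a] ∘ [b,a] = 0 holds, i.e., [[b,a],a]·[b,a] + [b,a]·[[b,a],a] = 0. -/
set_option maxHeartbeats 1000000 in
theorem identity_eq7 (K : Type*) [Field K] [CharZero K]
    (a b : Matrix (Fin 2) (Fin 2) K) (ha : a.IsSymm) (hb : b.IsSymm) :
    ((b * a - a * b) * a - a * (b * a - a * b)) * (b * a - a * b)
      + (b * a - a * b) * ((b * a - a * b) * a - a * (b * a - a * b)) = 0 := by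
  have ha' : a 1 0 = a 0 1 := by rw [← ha.apply]
  have hb' : b 1 0 = b 0 1 := by rw [← hb.apply]
  ext i j
  simp only [Matrix.add_apply, Matrix.sub_apply, Matrix.mul_apply, Fin.sum_univ_two,
    Matrix.zero_apply]
  fin_cases i <;> fin_cases j <;> simp only [Fin.mk_zero, Fin.mk_one, ha', hb'] <;> ring
end

section
/- Let K be a field of characteristic 0. For any symmetric 2×2 matrices a₁,…,a_{2k} and b₁,…,b_{2l} over K, the left-normed commutators of even length commute: [a₁,…,a_{2k}]·[b₁,…,b_{2l}] = [b₁,…,b_{2l}]·[a₁,…,a_{2k}]. -/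
/-- Left-normed commutator of a list of matrices: `[a₁, a₂, …, aₙ]`;
the empty list gives `1`. -/
def leftNormedComm {K : Type*} [Field K] :
    List (Matrix (Fin 2) (Fin 2) K) → Matrix (Fin 2) (Fin 2) K
  | [] => 1
  | (a :: t) => t.foldl (fun u v => u * v - v * u) a

/-!
Transposition reverses products, so bracketing with a symmetric matrix turns a matrix with
`uᵀ = c • u` into one with `[u, v]ᵀ = -c • [u, v]`. Hence an even-length commutator of symmetric
matrices is skew-symmetric (or the empty commutator `1`). Away from characteristic 2, the
skew-symmetric `2 × 2` matrices form the line spanned by `!![0, 1; -1, 0]`, so any two of them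
commute.
-/

namespace Matrix

variable {n R : Type*} [Fintype n] [CommRing R]

theorem transpose_commutator_of_isSymm {u v : Matrix n n R} {c : R} (hu : uᵀ = c • u)
    (hv : v.IsSymm) : (u * v - v * u)ᵀ = (-c) • (u * v - v * u) := by
  rw [transpose_sub, transpose_mul, transpose_mul, hv.eq, hu, Matrix.mul_smul, Matrix.smul_mul]
  module

theorem transpose_foldl_commutator_of_isSymm {t : List (Matrix n n R)} (ht : ∀ v ∈ t, v.IsSymm)
    {u : Matrix n n R} {c : R} (hu : uᵀ = c • u) :
    (t.foldl (fun u v => u * v - v * u) u)ᵀ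
      = ((-1) ^ t.length * c) • t.foldl (fun u v => u * v - v * u) u := by
  induction t generalizing u c with
  | nil => simpa using hu
  | cons v t ih =>
    have hvt := List.forall_mem_cons.mp ht
    rw [List.foldl_cons, ih hvt.2 (transpose_commutator_of_isSymm hu hvt.1), List.length_cons,
      pow_succ]
    congr 1
    ring

theorem eq_smul_of_transpose_eq_neg [IsAddTorsionFree R] {A : Matrix (Fin 2) (Fin 2) R}
    (hA : Aᵀ = -A) : A = A 0 1 • !![0, 1; -1, 0] := by
  have entry (i j : Fin 2) : A j i = -A i j := congrFun (congrFun hA i) j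
  have h00 : A 0 0 = 0 := self_eq_neg.mp (entry 0 0)
  have h11 : A 1 1 = 0 := self_eq_neg.mp (entry 1 1)
  ext i j
  fin_cases i <;> fin_cases j <;> simp [h00, h11, entry 0 1]

theorem commute_of_transpose_eq_neg [IsAddTorsionFree R] {A B : Matrix (Fin 2) (Fin 2) R}
    (hA : Aᵀ = -A) (hB : Bᵀ = -B) : Commute A B := by
  rw [eq_smul_of_transpose_eq_neg hA, eq_smul_of_transpose_eq_neg hB]
  exact ((Commute.refl _).smul_left _).smul_right _

end Matrix

open scoped Matrix

theorem leftNormedComm_eq_one_or_transpose_eq_neg {K : Type*} [Field K]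
    {L : List (Matrix (Fin 2) (Fin 2) K)} (hL : ∀ v ∈ L, v.IsSymm) (he : Even L.length) :
    leftNormedComm L = 1 ∨ (leftNormedComm L)ᵀ = -leftNormedComm L := by
  rcases L with _ | ⟨u, t⟩
  · exact Or.inl rfl
  · have hut := List.forall_mem_cons.mp hL
    have hodd : Odd t.length := by simpa [Nat.even_add_one] using he
    right
    have := Matrix.transpose_foldl_commutator_of_isSymm hut.2 (c := 1) (by simpa using hut.1.eq)
    rwa [hodd.neg_one_pow, mul_one, neg_one_smul] at this

theorem commute_leftNormedComm_of_even {K : Type*} [Field K] [IsAddTorsionFree K]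
    {L M : List (Matrix (Fin 2) (Fin 2) K)} (hL : ∀ v ∈ L, v.IsSymm) (hLe : Even L.length)
    (hM : ∀ v ∈ M, v.IsSymm) (hMe : Even M.length) :
    Commute (leftNormedComm L) (leftNormedComm M) := by
  rcases leftNormedComm_eq_one_or_transpose_eq_neg hL hLe with h1 | hA
  · exact h1 ▸ Commute.one_left _
  rcases leftNormedComm_eq_one_or_transpose_eq_neg hM hMe with h1 | hB
  · exact h1 ▸ Commute.one_right _
  exact Matrix.commute_of_transpose_eq_neg hA hB

theorem even_length_commutators_commute (K : Type*) [Field K] [CharZero K]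
    (k l : ℕ) (a : Fin (2 * k) → Matrix (Fin 2) (Fin 2) K)
    (b : Fin (2 * l) → Matrix (Fin 2) (Fin 2) K)
    (ha : ∀ i, (a i).IsSymm) (hb : ∀ i, (b i).IsSymm) :
    leftNormedComm (List.ofFn a) * leftNormedComm (List.ofFn b)
      = leftNormedComm (List.ofFn b) * leftNormedComm (List.ofFn a) :=
  (commute_leftNormedComm_of_even (by simpa using ha) (by simp) (by simpa using hb) (by simp)).eq
end

section
/- Let K be a field of characteristic 0. For any two symmetric 2×2 matrices a and b over K, [[b,a,a,a],[b,a]] = 0, where [b,a,a,a] = [[[b,a],a],a] is the left-normed commutator. -/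
/-- The commutator `[x, y] = x*y - y*x`. -/
def br {K : Type*} [Field K] (x y : Matrix (Fin 2) (Fin 2) K) :
    Matrix (Fin 2) (Fin 2) K := x * y - y * x

set_option maxHeartbeats 4000000 in
theorem identity_eq19 (K : Type*) [Field K] [CharZero K]
    (a b : Matrix (Fin 2) (Fin 2) K) (ha : a.IsSymm) (hb : b.IsSymm) :
    br (br (br (br b a) a) a) (br b a) = 0 := by
  have ha' : a 1 0 = a 0 1 := ha.apply 0 1
  have hb' : b 1 0 = b 0 1 := hb.apply 0 1
  ext i j
  fin_cases i <;> fin_cases j <;>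
    simp [br, Matrix.mul_apply, Matrix.sub_apply, Fin.sum_univ_two, ha', hb'] <;>
    ring
end

section
/- Let K be a field of characteristic 0. For any two symmetric 2×2 matrices a and b over K, [b,a,a]² = −[b,a,a,a]·[b,a], where [b,a,a] = [[b,a],a] and [b,a,a,a] = [[[b,a],a],a]. -/
set_option maxHeartbeats 2000000 in
lemma identity_eq20_aux {K : Type*} [Field K] (p q s t u w : K) :
    br (br !![t,u;u,w] !![p,q;q,s]) !![p,q;q,s] * br (br !![t,u;u,w] !![p,q;q,s]) !![p,q;q,s]
      = -(br (br (br !![t,u;u,w] !![p,q;q,s]) !![p,q;q,s]) !![p,q;q,s]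
          * br !![t,u;u,w] !![p,q;q,s]) := by
  simp only [br, Matrix.mul_fin_two, Matrix.sub_apply]
  ext i j
  fin_cases i <;> fin_cases j <;>
    simp [Matrix.sub_apply, Matrix.neg_apply] <;> ring

theorem identity_eq20 (K : Type*) [Field K] [CharZero K]
    (a b : Matrix (Fin 2) (Fin 2) K) (ha : a.IsSymm) (hb : b.IsSymm) :
    br (br b a) a * br (br b a) a = -(br (br (br b a) a) a * br b a) := by
  have ha' : a 1 0 = a 0 1 := by
    have := congrFun (congrFun ha 0) 1; simpa [Matrix.transpose_apply] using this
  have hb' : b 1 0 = b 0 1 := by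
    have := congrFun (congrFun hb 0) 1; simpa [Matrix.transpose_apply] using this
  have hA : a = !![a 0 0, a 0 1; a 0 1, a 1 1] := by
    conv_lhs => rw [Matrix.eta_fin_two a]
    rw [ha']
  have hB : b = !![b 0 0, b 0 1; b 0 1, b 1 1] := by
    conv_lhs => rw [Matrix.eta_fin_two b]
    rw [hb']
  rw [hA, hB]
  exact identity_eq20_aux _ _ _ _ _ _
end

section
/- Let K be a field of characteristic 0. For any two symmetric 2×2 matrices a and b over K, [[b,a,b],[b,a,a]] = −4·[b,a]³, where [b,a,b] = [[b,a],b], [b,a,a] = [[b,a],a], and [b,a]³ is the matrix cube of the commutator. -/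
set_option maxHeartbeats 1000000 in
lemma identity_eq21_aux (K : Type*) [Field K]
    (p q r s t u : K) :
    br (br (br !![s,t;t,u] !![p,q;q,r]) !![s,t;t,u]) (br (br !![s,t;t,u] !![p,q;q,r]) !![p,q;q,r]) =
      -(4 : K) • (br !![s,t;t,u] !![p,q;q,r] * br !![s,t;t,u] !![p,q;q,r] * br !![s,t;t,u] !![p,q;q,r]) := by
  simp only [br]
  ext i j
  fin_cases i <;> fin_cases j <;>
    simp [Matrix.mul_apply, Fin.sum_univ_two, Matrix.sub_apply] <;> ring

set_option maxHeartbeats 1000000 in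
theorem identity_eq21 (K : Type*) [Field K] [CharZero K]
    (a b : Matrix (Fin 2) (Fin 2) K) (ha : a.IsSymm) (hb : b.IsSymm) :
    br (br (br b a) b) (br (br b a) a) = -(4 : K) • (br b a * br b a * br b a) := by
  have ha' : a 1 0 = a 0 1 := by
    have := congrFun (congrFun ha 0) 1; simpa [Matrix.transpose_apply] using this
  have hb' : b 1 0 = b 0 1 := by
    have := congrFun (congrFun hb 0) 1; simpa [Matrix.transpose_apply] using this
  have hA : a = !![a 0 0, a 0 1; a 0 1, a 1 1] := by
    ext i j; fin_cases i <;> fin_cases j <;> simp [ha']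
  have hB : b = !![b 0 0, b 0 1; b 0 1, b 1 1] := by
    ext i j; fin_cases i <;> fin_cases j <;> simp [hb']
  rw [hA, hB]
  exact identity_eq21_aux K _ _ _ _ _ _
end

section
/- Let K be a field of characteristic 0. For any symmetric 2×2 matrices a₁,…,a₄ and b over K, the identity Σ_{σ∈Sym(3)} sgn(σ)·[a_{σ(1)},a_{σ(2)}]·b·[a_{σ(3)},a₄] = 0 holds (Sym(3) permutes indices 1,2,3). -/
set_option maxHeartbeats 2000000 in
theorem identity_eq10 (K : Type*) [Field K] [CharZero K]
    (a : Fin 3 → Matrix (Fin 2) (Fin 2) K) (a₄ b : Matrix (Fin 2) (Fin 2) K)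
    (h : ∀ i, (a i).IsSymm) (h₄ : a₄.IsSymm) (hb : b.IsSymm) :
    ∑ σ : Equiv.Perm (Fin 3),
      (Equiv.Perm.sign σ : ℤ) • (br (a (σ 0)) (a (σ 1)) * b * br (a (σ 2)) a₄) = 0 := by
  have huniv : (Finset.univ : Finset (Equiv.Perm (Fin 3))) =
    {1, Equiv.swap 0 1, Equiv.swap 0 2, Equiv.swap 1 2,
     Equiv.swap 0 1 * Equiv.swap 1 2, Equiv.swap 1 2 * Equiv.swap 0 1} := by decide
  rw [huniv]
  have h0 := fun i => (h i).apply 0 1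
  have h4 := h₄.apply 0 1
  have hb' := hb.apply 0 1
  rw [Finset.sum_insert (by decide), Finset.sum_insert (by decide), Finset.sum_insert (by decide),
    Finset.sum_insert (by decide), Finset.sum_insert (by decide), Finset.sum_singleton]
  simp only [
    Equiv.Perm.sign_one, Equiv.Perm.sign_mul, Equiv.Perm.sign_swap (by decide : (0:Fin 3) ≠ 1),
    Equiv.Perm.sign_swap (by decide : (0:Fin 3) ≠ 2), Equiv.Perm.sign_swap (by decide : (1:Fin 3) ≠ 2),
    Equiv.Perm.mul_apply, Equiv.Perm.one_apply, Equiv.swap_apply_def]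
  norm_num
  ext i j
  fin_cases i <;> fin_cases j <;>
    simp [br, Matrix.mul_apply, Fin.sum_univ_succ, Matrix.sub_apply, Matrix.smul_apply,
      Matrix.add_apply, Matrix.neg_apply] <;>
    rw [h0 0, h0 1, h0 2, h4, hb'] <;> ring
end

section
/- Let K be a field of characteristic 0. For any symmetric 2×2 matrices a₁,a₂,a₃,a₄ and b over K, Σ_{σ∈Sym(2)} sgn(σ)·[a_{σ(1)},a₃]·b·[a_{σ(2)},a₄] = (1/2)·Σ_{σ∈Sym(2)} sgn(σ)·[a_{σ(1)},a_{σ(2)}]·b·[a₃,a₄], i.e., [a₁,a₃]b[a₂,a₄] − [a₂,a₃]b[a₁,a₄] = [a₁,a₂]b[a₃,a₄]. -/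
set_option maxHeartbeats 1600000 in
theorem identity_eq14 (K : Type*) [Field K] [CharZero K]
    (a₁ a₂ a₃ a₄ b : Matrix (Fin 2) (Fin 2) K)
    (h₁ : a₁.IsSymm) (h₂ : a₂.IsSymm) (h₃ : a₃.IsSymm) (h₄ : a₄.IsSymm)
    (hb : b.IsSymm) :
    br a₁ a₃ * b * br a₂ a₄ - br a₂ a₃ * b * br a₁ a₄
      = br a₁ a₂ * b * br a₃ a₄ := by
  have e₁ := h₁.apply 0 1
  have e₂ := h₂.apply 0 1
  have e₃ := h₃.apply 0 1
  have e₄ := h₄.apply 0 1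
  have eb := hb.apply 0 1
  rw [Matrix.eta_fin_two a₁, Matrix.eta_fin_two a₂, Matrix.eta_fin_two a₃,
    Matrix.eta_fin_two a₄, Matrix.eta_fin_two b, e₁, e₂, e₃, e₄, eb]
  generalize a₁ 0 0 = p₁; generalize a₁ 0 1 = q₁; generalize a₁ 1 1 = r₁
  generalize a₂ 0 0 = p₂; generalize a₂ 0 1 = q₂; generalize a₂ 1 1 = r₂
  generalize a₃ 0 0 = p₃; generalize a₃ 0 1 = q₃; generalize a₃ 1 1 = r₃
  generalize a₄ 0 0 = p₄; generalize a₄ 0 1 = q₄; generalize a₄ 1 1 = r₄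
  generalize b 0 0 = s; generalize b 0 1 = t; generalize b 1 1 = u
  simp only [br]
  ext i j
  fin_cases i <;> fin_cases j <;>
    · simp [Matrix.mul_apply, Fin.sum_univ_two, Matrix.sub_apply]
      ring
end

section
/- Let K be a field of characteristic 0. For any symmetric 2×2 matrices a₁,a₂,a₃,a₄ over K, [a₁,a₃]·[a₂,a₄] − [a₂,a₃]·[a₁,a₄] = [a₁,a₂]·[a₃,a₄]. -/
theorem identity_eq15 (K : Type*) [Field K] [CharZero K]
    (a₁ a₂ a₃ a₄ : Matrix (Fin 2) (Fin 2) K)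
    (h₁ : a₁.IsSymm) (h₂ : a₂.IsSymm) (h₃ : a₃.IsSymm) (h₄ : a₄.IsSymm) :
    br a₁ a₃ * br a₂ a₄ - br a₂ a₃ * br a₁ a₄ = br a₁ a₂ * br a₃ a₄ := by
  have e₁ : a₁ 1 0 = a₁ 0 1 := h₁.apply 0 1
  have e₂ : a₂ 1 0 = a₂ 0 1 := h₂.apply 0 1
  have e₃ : a₃ 1 0 = a₃ 0 1 := h₃.apply 0 1
  have e₄ : a₄ 1 0 = a₄ 0 1 := h₄.apply 0 1
  ext i j
  fin_cases i <;> fin_cases j <;>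
    simp [br, Matrix.mul_apply, Matrix.sub_apply, Fin.sum_univ_two, e₁, e₂, e₃, e₄] <;>
    ring
end

section
/- Let K be a field of characteristic 0. For any symmetric 2×2 matrices a₁,…,a₅ over K, [a₁,a₂]·[a₃,a₄,a₅] = −[a₃,a₄,a₅]·[a₁,a₂], where [a₃,a₄,a₅] = [[a₃,a₄],a₅]: a commutator of even length anticommutes with a commutator of odd length. -/
theorem even_odd_anticommute (K : Type*) [Field K] [CharZero K]
    (a₁ a₂ a₃ a₄ a₅ : Matrix (Fin 2) (Fin 2) K)
    (h₁ : a₁.IsSymm) (h₂ : a₂.IsSymm) (h₃ : a₃.IsSymm) (h₄ : a₄.IsSymm)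
    (h₅ : a₅.IsSymm) :
    br a₁ a₂ * br (br a₃ a₄) a₅ = -(br (br a₃ a₄) a₅ * br a₁ a₂) := by
  have e₁ := h₁.apply 0 1
  have e₂ := h₂.apply 0 1
  have e₃ := h₃.apply 0 1
  have e₄ := h₄.apply 0 1
  have e₅ := h₅.apply 0 1
  set A := br a₁ a₂ with hA
  set M := br (br a₃ a₄) a₅ with hM
  have A00 : A 0 0 = 0 := by
    simp [hA, br, Matrix.mul_apply, Matrix.sub_apply, Fin.sum_univ_two, e₁, e₂, e₃, e₄, e₅]; ring
  have A11 : A 1 1 = 0 := by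
    simp [hA, br, Matrix.mul_apply, Matrix.sub_apply, Fin.sum_univ_two, e₁, e₂]; ring
  have A10 : A 1 0 = -(A 0 1) := by
    simp [hA, br, Matrix.mul_apply, Matrix.sub_apply, Fin.sum_univ_two, e₁, e₂]; ring
  have M11 : M 1 1 = -(M 0 0) := by
    simp [hM, br, Matrix.mul_apply, Matrix.sub_apply, Fin.sum_univ_two, e₃, e₄, e₅]; ring
  have M10 : M 1 0 = M 0 1 := by
    simp [hM, br, Matrix.mul_apply, Matrix.sub_apply, Fin.sum_univ_two, e₃, e₄, e₅]; ring
  clear_value A M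
  ext i j
  fin_cases i <;> fin_cases j <;>
    simp only [Matrix.mul_apply, Matrix.neg_apply, Fin.sum_univ_two, Fin.mk_zero, Fin.mk_one, A00, A11, A10, M11, M10] <;> ring
end

section
/- Let K be a field of characteristic 0. For any symmetric 2×2 matrices a, b, c over K, the identity [b,a,a]∘[c,a] + [c,a,a]∘[b,a] = 0 holds, where x∘y = xy + yx and [x,y,z] = [[x,y],z]. -/
/-- The Jordan product `x ∘ y = x*y + y*x`. -/
def circ {K : Type*} [Field K] (x y : Matrix (Fin 2) (Fin 2) K) :
    Matrix (Fin 2) (Fin 2) K := x * y + y * x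

set_option maxHeartbeats 2000000 in
theorem linearized_eq7 (K : Type*) [Field K] [CharZero K]
    (a b c : Matrix (Fin 2) (Fin 2) K)
    (ha : a.IsSymm) (hb : b.IsSymm) (hc : c.IsSymm) :
    circ (br (br b a) a) (br c a) + circ (br (br c a) a) (br b a) = 0 := by
  have ha' : a 1 0 = a 0 1 := by rw [← ha.apply]
  have hb' : b 1 0 = b 0 1 := by rw [← hb.apply]
  have hc' : c 1 0 = c 0 1 := by rw [← hc.apply]
  ext i j
  fin_cases i <;> fin_cases j <;>
    simp [br, circ, Matrix.mul_apply, Fin.sum_univ_two, ha', hb', hc'] <;> ring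
end
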